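/- For every t ∈ [0,1], the 3×3 diagonal density matrices ρ = diag(1−t, t, 0) and σ = diag(1−t, 0, t) satisfy ‖ρ − σ‖₁/2 = t and S(ρ + I ‖ σ + I) = t·log(1 + t). -/

import Mathlib

open Matrix MeasureTheory
open scoped ComplexOrder

/-- Matrix logarithm on the support: apply `Real.log` (which is `0` at `0`) to the
eigenvalues of a Hermitian matrix via functional calculus; junk value `0` otherwise. -/
noncomputable def mlog {n : Type*} [Fintype n] [DecidableEq n] (A : Matrix n n ℂ) :
    Matrix n n ℂ :=
  if hA : A.IsHermitian then hA.cfc Real.log else 0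

/-- Quantum relative entropy `S(A‖B) = Tr A (log A - log B)`. -/
noncomputable def qRelEnt {n : Type*} [Fintype n] [DecidableEq n] (A B : Matrix n n ℂ) : ℝ :=
  ((A * (mlog A - mlog B)).trace).re

/-- The square root of a positive semidefinite matrix, as `Matrix.PosSemidef.sqrt` was
defined in the older Mathlib. -/
noncomputable def posSemidefSqrt {n : Type*} [Fintype n] [DecidableEq n] {A : Matrix n n ℂ}
    (hA : A.PosSemidef) : Matrix n n ℂ :=
  (hA.1.eigenvectorUnitary : Matrix n n ℂ) * diagonal ((↑) ∘ (√·) ∘ hA.1.eigenvalues) *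
    (star hA.1.eigenvectorUnitary : Matrix n n ℂ)

theorem posSemidefSqrt_isHermitian {n : Type*} [Fintype n] [DecidableEq n] {A : Matrix n n ℂ}
    (hA : A.PosSemidef) : (posSemidefSqrt hA).IsHermitian := by
  unfold posSemidefSqrt
  rw [Matrix.star_eq_conjTranspose]
  refine Matrix.isHermitian_mul_mul_conjTranspose _ ?_
  refine Matrix.isHermitian_diagonal_of_self_adjoint _ ?_
  ext i
  simp

/-- Trace norm `‖X‖₁ = Tr √(Xᴴ X)`. -/
noncomputable def traceNorm {n : Type*} [Fintype n] [DecidableEq n] (X : Matrix n n ℂ) : ℝ :=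
  ((posSemidefSqrt (Matrix.posSemidef_conjTranspose_mul_self X)).trace).re

/-- Smallest eigenvalue of a Hermitian matrix (junk value `0` otherwise). -/
noncomputable def lamMin {n : Type*} [Fintype n] [DecidableEq n] (A : Matrix n n ℂ) : ℝ :=
  if hA : A.IsHermitian then ⨅ i, hA.eigenvalues i else 0

/-- Largest eigenvalue of a Hermitian matrix (junk value `0` otherwise). -/
noncomputable def lamMax {n : Type*} [Fintype n] [DecidableEq n] (A : Matrix n n ℂ) : ℝ :=
  if hA : A.IsHermitian then ⨆ i, hA.eigenvalues i else 0

/-- Operator norm: largest eigenvalue of `√(Xᴴ X)` (largest singular value). -/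
noncomputable def opNorm {n : Type*} [Fintype n] [DecidableEq n] (X : Matrix n n ℂ) : ℝ :=
  ⨆ i, (posSemidefSqrt_isHermitian (Matrix.posSemidef_conjTranspose_mul_self X)).eigenvalues i

/-
All matrices involved are diagonal with real entries, and the continuous functional calculus of
such a matrix acts entry by entry. Hence the trace norm of `ρ - σ = diag(0, t, -t)` is
`∑ |dᵢ| = 2t`, and the relative entropy of `ρ + I = diag(2 - t, 1 + t, 1)` and
`σ + I = diag(2 - t, 1, 1 + t)` is the classical sum
`∑ aᵢ (log aᵢ - log bᵢ) = 0 + (1 + t) log(1 + t) - log(1 + t)`.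
-/

namespace Matrix

variable {n : Type*} [Fintype n] [DecidableEq n]

def diagonalStarAlgHom (R α : Type*) [CommSemiring R] [Semiring α] [StarRing α] [Algebra R α] :
    (n → α) →⋆ₐ[R] Matrix n n α :=
  { diagonalAlgHom R with
    map_star' := fun d => (diagonal_conjTranspose d).symm }

omit [Fintype n] [DecidableEq n] in
lemma spectrum_real_pi_ofReal (d : n → ℝ) :
    spectrum ℝ (fun i => (d i : ℂ)) = Set.range d := by
  simp only [Pi.spectrum_eq, ← Complex.coe_algebraMap, spectrum.scalar_eq,
    Set.iUnion_singleton_eq_range]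

omit [Fintype n] in
lemma isHermitian_diagonal_ofReal (d : n → ℝ) : (diagonal fun i => (d i : ℂ)).IsHermitian :=
  isHermitian_diagonal_of_self_adjoint _ (funext fun i => Complex.conj_ofReal (d i))

lemma cfc_diagonal_ofReal (f : ℝ → ℝ) (d : n → ℝ) :
    cfc f (diagonal fun i => (d i : ℂ)) = diagonal fun i => (f (d i) : ℂ) := by
  -- instance search misses this one, because of the two `ℝ`-algebra structures on `n → ℂ`
  let _ : ContinuousFunctionalCalculus ℝ (n → ℂ) IsSelfAdjoint :=
    IsSelfAdjoint.instContinuousFunctionalCalculus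
  have hd : IsSelfAdjoint (fun i => (d i : ℂ)) := funext fun i => Complex.conj_ofReal (d i)
  have hf : ContinuousOn f (spectrum ℝ (fun i => (d i : ℂ))) := by
    rw [spectrum_real_pi_ofReal]
    exact (Set.finite_range d).continuousOn f
  have hmap := (diagonalStarAlgHom ℂ ℂ).map_cfc f (fun i => (d i : ℂ))
    (hφ := Continuous.matrix_diagonal (X := n → ℂ) continuous_id)
  change cfc f (diagonalStarAlgHom ℂ ℂ _) = _
  rw [← hmap, cfc_map_pi (S := ℂ) f _ (by rwa [← Pi.spectrum_eq]) hd
    (q := fun _ => IsSelfAdjoint) (fun i => Complex.conj_ofReal (d i))]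
  exact congrArg diagonal (funext fun i => cfc_algebraMap (d i) f)

end Matrix

open Matrix

section

variable {n : Type*} [Fintype n] [DecidableEq n]

lemma mlog_diagonal_ofReal (d : n → ℝ) :
    mlog (diagonal fun i => (d i : ℂ)) = diagonal fun i => (Real.log (d i) : ℂ) := by
  rw [mlog, dif_pos (isHermitian_diagonal_ofReal d), ← IsHermitian.cfc_eq, cfc_diagonal_ofReal]

lemma qRelEnt_diagonal_ofReal (a b : n → ℝ) :
    qRelEnt (diagonal fun i => (a i : ℂ)) (diagonal fun i => (b i : ℂ)) =
      ∑ i, a i * (Real.log (a i) - Real.log (b i)) := by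
  rw [qRelEnt, mlog_diagonal_ofReal, mlog_diagonal_ofReal, diagonal_sub, diagonal_mul_diagonal,
    trace_diagonal, Complex.re_sum]
  simp [← Complex.ofReal_sub, ← Complex.ofReal_mul]

lemma posSemidefSqrt_eq_cfc {A : Matrix n n ℂ} (hA : A.PosSemidef) :
    posSemidefSqrt hA = cfc Real.sqrt A := by
  rw [hA.1.cfc_eq, IsHermitian.cfc, Unitary.conjStarAlgAut_apply]
  rfl

lemma traceNorm_diagonal_ofReal (d : n → ℝ) :
    traceNorm (diagonal fun i => (d i : ℂ)) = ∑ i, |d i| := by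
  have hsq : (diagonal fun i => (d i : ℂ))ᴴ * diagonal (fun i => (d i : ℂ)) =
      diagonal fun i => ((d i ^ 2 : ℝ) : ℂ) := by
    rw [(isHermitian_diagonal_ofReal d).eq, diagonal_mul_diagonal]
    simp [sq]
  rw [traceNorm, posSemidefSqrt_eq_cfc, hsq, cfc_diagonal_ofReal, trace_diagonal, Complex.re_sum]
  simp [Real.sqrt_sq_eq_abs]

end

/-- The bound `S(ρ + I ‖ σ + I) ≤ T log(1 + T)` is achieved by a pair of `3×3`
diagonal density matrices, for every `t ∈ [0,1]`. -/
theorem regRelEntropy_bound_sharp (t : ℝ) (ht : t ∈ Set.Icc (0 : ℝ) 1) :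
    let ρ : Matrix (Fin 3) (Fin 3) ℂ := Matrix.diagonal ![((1 - t : ℝ) : ℂ), (t : ℂ), 0]
    let σ : Matrix (Fin 3) (Fin 3) ℂ := Matrix.diagonal ![((1 - t : ℝ) : ℂ), 0, (t : ℂ)]
    traceNorm (ρ - σ) / 2 = t ∧
    qRelEnt (ρ + 1) (σ + 1) = t * Real.log (1 + t) := by
  intro ρ σ
  have hsub : ρ - σ = diagonal fun i => ((![0, t, -t] : Fin 3 → ℝ) i : ℂ) := by
    rw [diagonal_sub]
    congr 1
    ext i
    fin_cases i <;> simp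
  have hρ : ρ + 1 = diagonal fun i => ((![2 - t, 1 + t, 1] : Fin 3 → ℝ) i : ℂ) := by
    rw [← diagonal_one, diagonal_add]
    congr 1
    ext i
    fin_cases i <;> simp <;> ring
  have hσ : σ + 1 = diagonal fun i => ((![2 - t, 1, 1 + t] : Fin 3 → ℝ) i : ℂ) := by
    rw [← diagonal_one, diagonal_add]
    congr 1
    ext i
    fin_cases i <;> simp <;> ring
  rw [hsub, hρ, hσ, traceNorm_diagonal_ofReal, qRelEnt_diagonal_ofReal]
  simp [Fin.sum_univ_three, abs_of_nonneg ht.1]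
  ring
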